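/- For the k-qubit GHZ state and any choice of bits b_1,…,b_k ∈ {0,1} with Σ_i b_i even, measuring qubit i in the X-basis if b_i = 0 and in the Y-basis if b_i = 1 yields outcomes m_1,…,m_k satisfying Σ_i m_i ≡ (1/2) Σ_i b_i (mod 2) with probability 1. -/
import Mathlib


open Complex Finset

noncomputable section

/-- The k-qubit GHZ state (|0⟩^⊗k + |1⟩^⊗k)/√2, as an amplitude function. -/
def ghz (k : ℕ) : (Fin k → Fin 2) → ℂ :=
  fun x => if (∀ i, x i = 0) ∨ (∀ i, x i = 1) then ((1 / Real.sqrt 2 : ℝ) : ℂ) else 0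

/-- The measurement basis vector with basis bit `b` (b=0: X-basis, b=1: Y-basis) and
outcome bit `m`: (|0⟩ + i^b (−1)^m |1⟩)/√2. -/
def mvec (b m : Fin 2) : Fin 2 → ℂ :=
  fun c =>
    ((1 / Real.sqrt 2 : ℝ) : ℂ) *
      (if c = 0 then 1 else (if b = 0 then 1 else Complex.I) * (if m = 0 then 1 else -1))

/-- The amplitude of outcome string `mm` when qubit i of the GHZ state is measured in the
X-basis (if b i = 0) or Y-basis (if b i = 1). -/
def outcomeAmp (k : ℕ) (b mm : Fin k → Fin 2) : ℂ :=
  ∑ y : Fin k → Fin 2, (∏ i, star (mvec (b i) (mm i) (y i))) * ghz k y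

/-- GHZ stabilizer correlations: if Σ b_i is even, then with probability 1 the outcomes
satisfy Σ m_i ≡ (1/2) Σ b_i (mod 2); i.e. every outcome string violating this parity
relation has amplitude 0. -/
theorem ghz_verification_correlations (k : ℕ) (hk : 1 ≤ k) (b : Fin k → Fin 2)
    (heven : (∑ i, (b i).val) % 2 = 0) (mm : Fin k → Fin 2)
    (hbad : (∑ i, (mm i).val) % 2 ≠ ((∑ i, (b i).val) / 2) % 2) :
    outcomeAmp k b mm = 0 := by
  classical
  set s : ℂ := ((1 / Real.sqrt 2 : ℝ) : ℂ) with hs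
  set B := ∑ i, (b i).val with hB
  set M := ∑ i, (mm i).val with hM
  set f : (Fin k → Fin 2) → ℂ :=
    fun y => (∏ i, star (mvec (b i) (mm i) (y i))) * ghz k y with hf
  have hne : (fun _ : Fin k => (0 : Fin 2)) ≠ (fun _ => 1) := by
    intro h
    have := congrFun h ⟨0, hk⟩
    simp at this
  have hsub : ({(fun _ => 0), (fun _ => 1)} : Finset (Fin k → Fin 2)) ⊆ univ :=
    subset_univ _
  have hzero : ∀ y ∈ (univ : Finset (Fin k → Fin 2)),
      y ∉ ({(fun _ => 0), (fun _ => 1)} : Finset (Fin k → Fin 2)) → f y = 0 := by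
    intro y _ hy
    simp only [mem_insert, mem_singleton] at hy
    push_neg at hy
    have h0 : ¬ (∀ i, y i = 0) := by
      intro h; exact hy.1 (funext h)
    have h1 : ¬ (∀ i, y i = 1) := by
      intro h; exact hy.2 (funext h)
    simp [hf, ghz, h0, h1]
  have hsum : outcomeAmp k b mm = f (fun _ => 0) + f (fun _ => 1) := by
    rw [outcomeAmp, ← Finset.sum_subset hsub hzero, Finset.sum_pair hne]
  rw [hsum]
  -- compute f at const 0
  have hstar0 : ∀ i : Fin k, star (mvec (b i) (mm i) 0) = s := by
    intro i
    simp [mvec, hs]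
  have hstar1 : ∀ i : Fin k,
      star (mvec (b i) (mm i) 1) = s * ((-Complex.I) ^ (b i).val * (-1 : ℂ) ^ (mm i).val) := by
    intro i
    have h1 : b i = 0 ∨ b i = 1 := by omega
    have h2 : mm i = 0 ∨ mm i = 1 := by omega
    rcases h1 with h1 | h1 <;> rcases h2 with h2 | h2 <;>
      simp [mvec, hs, h1, h2]
  have hf0 : f (fun _ => 0) = s ^ k * s := by
    simp only [hf]
    rw [show ghz k (fun _ => 0) = s by simp [ghz, hs]]
    congr 1
    rw [Finset.prod_congr rfl (fun i _ => hstar0 i)]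
    simp
  have hf1 : f (fun _ => 1) = s ^ k * ((-Complex.I) ^ B * (-1 : ℂ) ^ M) * s := by
    simp only [hf]
    rw [show ghz k (fun _ => 1) = s by simp [ghz, hs]]
    congr 1
    rw [Finset.prod_congr rfl (fun i _ => hstar1 i)]
    rw [Finset.prod_mul_distrib, Finset.prod_mul_distrib]
    rw [Finset.prod_pow_eq_pow_sum, Finset.prod_pow_eq_pow_sum]
    simp [hB, hM]
  rw [hf0, hf1]
  have key : (-Complex.I) ^ B * (-1 : ℂ) ^ M = -1 := by
    obtain ⟨t, ht⟩ : ∃ t, B = 2 * t := ⟨B / 2, by omega⟩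
    have hIt : (-Complex.I) ^ B = (-1 : ℂ) ^ t := by
      rw [ht, pow_mul]
      norm_num [Complex.I_sq]
    rw [hIt, ← pow_add]
    have hodd : Odd (t + M) := by
      rw [Nat.odd_iff]
      have ht2 : B / 2 = t := by omega
      rw [ht2] at hbad
      omega
    exact hodd.neg_one_pow
  rw [key]
  ring
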